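/- For θ ∈ [π/2, π], the double integral ∫₀^{2π} ∫₀^1 γ · 1_{γ sin²(θ − β) ≤ sin²(θ)} (1/(2π)) dγ dβ equals (π − θ)/π − (2 − cos(2θ)) sin(2θ)/(6π). -/

import Mathlib

open Real intervalIntegral MeasureTheory Set

/-! With `s = sin θ`, the inner integral is `∫₀^{min(1, s² / sin²(θ - β))} γ dγ`, a function of
`sin²(θ - β)` alone, so it is even and `π`-periodic in `θ - β` and the outer integral is four times
its integral over `[0, π/2]`. There `sin² x ≤ s²` exactly on `[0, π - θ]`, where the integrand is
`1/2`; beyond `π - θ` it is `s⁴ / (2 sin⁴ x)`, and `-(cot x + cot³ x / 3)` is an antiderivative of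
`sin⁻⁴ x`. -/

noncomputable def cutoffMoment (b a : ℝ) : ℝ :=
  if a ≤ b then 1 / 2 else (b / a) ^ 2 / 2

theorem integral_mul_ite_mul_le {a b : ℝ} (hb : 0 ≤ b) :
    ∫ γ in (0 : ℝ)..1, γ * (if γ * a ≤ b then (1 : ℝ) else 0) = cutoffMoment b a := by
  unfold cutoffMoment
  split_ifs with hab
  · have h : EqOn (fun γ : ℝ => γ * (if γ * a ≤ b then (1 : ℝ) else 0)) id (uIcc 0 1) := by
      intro γ hγ
      rw [uIcc_of_le zero_le_one] at hγ
      have : γ * a ≤ b := by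
        rcases le_total 0 a with ha | ha <;> nlinarith [hγ.1, hγ.2]
      simp [this]
    rw [integral_congr h]
    norm_num
  · have ha : 0 < a := by linarith
    have h : (fun γ : ℝ => γ * (if γ * a ≤ b then (1 : ℝ) else 0))
        = {x | x ≤ b / a}.indicator id := by
      ext γ
      simp [indicator, le_div_iff₀ ha]
    rw [h, integral_indicator ⟨div_nonneg hb ha.le, (div_le_one ha).2 (by linarith)⟩]
    simp

theorem abs_cutoffMoment_le {a b : ℝ} (hb : 0 ≤ b) : |cutoffMoment b a| ≤ 1 / 2 := by
  unfold cutoffMoment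
  split_ifs with hab
  · norm_num
  · have ha : 0 < a := by linarith
    have h0 : 0 ≤ b / a := div_nonneg hb ha.le
    have h1 : b / a ≤ 1 := (div_le_one ha).2 (by linarith)
    rw [abs_of_nonneg (by positivity)]
    nlinarith

theorem measurable_cutoffMoment (b : ℝ) : Measurable (cutoffMoment b) :=
  Measurable.piecewise measurableSet_Iic measurable_const (by fun_prop)

theorem intervalIntegrable_cutoffMoment_comp {b : ℝ} (hb : 0 ≤ b) {f : ℝ → ℝ}
    (hf : Measurable f) (t₁ t₂ : ℝ) :
    IntervalIntegrable (fun x => cutoffMoment b (f x)) volume t₁ t₂ :=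
  (Measure.integrableOn_of_bounded (M := 1 / 2) isCompact_uIcc.measure_lt_top.ne
    ((measurable_cutoffMoment b).comp hf).aestronglyMeasurable
    (ae_of_all _ fun _ => abs_cutoffMoment_le hb)).intervalIntegrable

theorem integral_neg_self_of_even {f : ℝ → ℝ} (he : ∀ x, f (-x) = f x)
    (hi : ∀ t₁ t₂, IntervalIntegrable f volume t₁ t₂) (a : ℝ) :
    ∫ x in -a..a, f x = 2 * ∫ x in 0..a, f x := by
  have h : ∫ x in -a..0, f x = ∫ x in 0..a, f x := by
    simpa [he] using (integral_comp_neg (a := 0) (b := a) f).symm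
  rw [← integral_add_adjacent_intervals (hi (-a) 0) (hi 0 a), h, two_mul]

theorem integral_comp_sub_of_even_of_periodic {f : ℝ → ℝ} {T : ℝ} (hp : Function.Periodic f T)
    (he : ∀ x, f (-x) = f x) (hi : ∀ t₁ t₂, IntervalIntegrable f volume t₁ t₂) (θ : ℝ) :
    ∫ β in (0 : ℝ)..2 * T, f (θ - β) = 4 * ∫ x in 0..T / 2, f x := by
  have h := hp.intervalIntegral_add_zsmul_eq 2 (θ - 2 * T) hi
  rw [hp.intervalIntegral_add_eq (θ - 2 * T) (-(T / 2)), show -(T / 2) + T = T / 2 by ring,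
    integral_neg_self_of_even he hi] at h
  rw [integral_comp_sub_left, sub_zero]
  simp only [zsmul_eq_mul, Int.cast_ofNat, sub_add_cancel] at h
  rw [h]
  ring

theorem sin_sq_le_sin_sq_iff {x y : ℝ} (hx : x ∈ Icc 0 (π / 2)) (hy : y ∈ Icc 0 (π / 2)) :
    sin x ^ 2 ≤ sin y ^ 2 ↔ x ≤ y := by
  have hmono : StrictMonoOn sin (Icc 0 (π / 2)) :=
    strictMonoOn_sin.mono (Icc_subset_Icc (by linarith [pi_pos]) le_rfl)
  rw [pow_le_pow_iff_left₀ (sin_nonneg_of_nonneg_of_le_pi hx.1 (by linarith [hx.2, pi_pos]))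
    (sin_nonneg_of_nonneg_of_le_pi hy.1 (by linarith [hy.2, pi_pos])) two_ne_zero]
  exact hmono.le_iff_le hx hy

theorem hasDerivAt_cot {x : ℝ} (h : sin x ≠ 0) : HasDerivAt cot (-(sin x ^ 2)⁻¹) x := by
  have hcot : cot = fun x => cos x / sin x := funext cot_eq_cos_div_sin
  rw [hcot]
  refine ((hasDerivAt_cos x).div (hasDerivAt_sin x) h).congr_deriv ?_
  field_simp
  linear_combination -sin_sq_add_cos_sq x

theorem hasDerivAt_neg_cot_sub_cot_pow_three {x : ℝ} (h : sin x ≠ 0) :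
    HasDerivAt (fun x => -(cot x + cot x ^ 3 / 3)) (sin x ^ 4)⁻¹ x := by
  refine ((hasDerivAt_cot h).add ((hasDerivAt_cot h).pow 3 |>.div_const 3)).neg.congr_deriv ?_
  rw [cot_eq_cos_div_sin]
  simp only [Nat.cast_ofNat, Nat.add_one_sub_one, mul_neg, neg_add_rev, neg_neg]
  field_simp
  linear_combination sin_sq_add_cos_sq x

theorem integral_inv_sin_pow_four {a b : ℝ} (h : ∀ x ∈ uIcc a b, sin x ≠ 0) :
    ∫ x in a..b, (sin x ^ 4)⁻¹ = (cot a + cot a ^ 3 / 3) - (cot b + cot b ^ 3 / 3) := by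
  rw [integral_eq_sub_of_hasDerivAt (fun x hx => hasDerivAt_neg_cot_sub_cot_pow_three (h x hx))]
  · ring
  · exact ContinuousOn.intervalIntegrable
      ((continuous_sin.pow 4).continuousOn.inv₀ fun x hx => pow_ne_zero 4 (h x hx))

theorem sin_pow_four_mul_integral_inv_sin_pow_four {θ : ℝ} (hθ : θ ∈ Icc (π / 2) π) :
    sin θ ^ 4 * ∫ x in π - θ..π / 2, (sin x ^ 4)⁻¹
      = -(sin θ ^ 3 * cos θ + sin θ * cos θ ^ 3 / 3) := by
  obtain ⟨hθ₁, hθ₂⟩ := hθ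
  -- at `θ = π` the integral diverges (junk value `0`), harmless since `sin π ^ 4 = 0`
  rcases hθ₂.eq_or_lt with rfl | hθπ
  · simp
  have hsin : ∀ x ∈ uIcc (π - θ) (π / 2), sin x ≠ 0 := by
    intro x hx
    rw [uIcc_of_le (by linarith)] at hx
    exact (sin_pos_of_pos_of_lt_pi (by linarith [hx.1]) (by linarith [hx.2, pi_pos])).ne'
  have hs : sin θ ≠ 0 := (sin_pos_of_pos_of_lt_pi (by linarith [pi_pos]) hθπ).ne'
  rw [integral_inv_sin_pow_four hsin, cot_eq_cos_div_sin, cot_eq_cos_div_sin, cos_pi_sub,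
    sin_pi_sub, cos_pi_div_two]
  field_simp
  ring

theorem integral_cutoffMoment_sin_sq {θ : ℝ} (hθ : θ ∈ Icc (π / 2) π) :
    ∫ x in (0 : ℝ)..π / 2, cutoffMoment (sin θ ^ 2) (sin x ^ 2)
      = (π - θ) / 2 - (sin θ ^ 3 * cos θ + sin θ * cos θ ^ 3 / 3) / 2 := by
  obtain ⟨hθ₁, hθ₂⟩ := hθ
  have hpi := pi_pos
  have hmem : π - θ ∈ Icc 0 (π / 2) := ⟨by linarith, by linarith⟩
  have hle : ∀ x ∈ Icc 0 (π / 2), (sin x ^ 2 ≤ sin θ ^ 2 ↔ x ≤ π - θ) := fun x hx => by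
    rw [← sin_sq_le_sin_sq_iff hx hmem, sin_pi_sub]
  have hi := intervalIntegrable_cutoffMoment_comp (sq_nonneg (sin θ))
    (measurable_sin.pow_const 2)
  have hgood : EqOn (fun x => cutoffMoment (sin θ ^ 2) (sin x ^ 2)) (fun _ => 1 / 2)
      (uIcc 0 (π - θ)) := by
    intro x hx
    rw [uIcc_of_le hmem.1] at hx
    simp [cutoffMoment, (hle x ⟨hx.1, hx.2.trans hmem.2⟩).2 hx.2]
  have hbad : ∀ x ∈ uIoc (π - θ) (π / 2), cutoffMoment (sin θ ^ 2) (sin x ^ 2)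
      = sin θ ^ 4 / 2 * (sin x ^ 4)⁻¹ := by
    intro x hx
    rw [uIoc_of_le hmem.2] at hx
    rw [cutoffMoment, if_neg (by rw [hle x ⟨hmem.1.trans hx.1.le, hx.2⟩]; exact hx.1.not_ge)]
    ring
  rw [← integral_add_adjacent_intervals (hi 0 (π - θ)) (hi (π - θ) (π / 2)),
    integral_congr hgood, integral_congr_ae (ae_of_all _ hbad),
    intervalIntegral.integral_const_mul,
    div_mul_eq_mul_div, sin_pow_four_mul_integral_inv_sin_pow_four ⟨hθ₁, hθ₂⟩]
  simp only [one_div, intervalIntegral.integral_const, sub_zero, smul_eq_mul, neg_add_rev]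
  ring

/-- For `θ ∈ [π/2, π]`,
`∫₀^{2π} ∫₀^1 γ 1_{γ sin²(θ-β) ≤ sin²θ} (1/(2π)) dγ dβ = (π-θ)/π − (2 - cos 2θ) sin 2θ / (6π)`. -/
theorem double_integral_indicator_second (θ : ℝ) (hθ : θ ∈ Set.Icc (π / 2) π) :
    ∫ β in (0 : ℝ)..(2 * π), ∫ γ in (0 : ℝ)..1,
      γ * (if γ * Real.sin (θ - β) ^ 2 ≤ Real.sin θ ^ 2 then (1 : ℝ) else 0) * (1 / (2 * π))
      = (π - θ) / π - (2 - Real.cos (2 * θ)) * Real.sin (2 * θ) / (6 * π) := by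
  have hb := sq_nonneg (sin θ)
  have hperiodic : Function.Periodic (fun x => cutoffMoment (sin θ ^ 2) (sin x ^ 2)) π :=
    fun x => by simp only [sin_add_pi, neg_sq]
  have heven :
      ∀ x, cutoffMoment (sin θ ^ 2) (sin (-x) ^ 2) = cutoffMoment (sin θ ^ 2) (sin x ^ 2) :=
    fun x => by rw [sin_neg, neg_sq]
  simp_rw [intervalIntegral.integral_mul_const, integral_mul_ite_mul_le hb]
  rw [integral_comp_sub_of_even_of_periodic hperiodic heven
    (intervalIntegrable_cutoffMoment_comp hb (measurable_sin.pow_const 2)),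
    integral_cutoffMoment_sin_sq hθ, cos_two_mul, sin_two_mul]
  field_simp
  linear_combination (-72 * sin θ * cos θ) * sin_sq_add_cos_sq θ
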